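/- Let π ∝ exp(−U) and π_μ ∝ exp(−U_μ) be probability densities on ℝ^d such that |U_μ(x) − U(x)| ≤ M for all x with 0 ≤ M ≤ 0.05, and suppose ∫‖x‖² π(x) dx = E₂ < ∞. Then the squared 2-Wasserstein distance satisfies W₂²(π, π_μ) ≤ 2(2M + e^{2M} − 1) E₂ ≤ 8.24 M E₂. -/

import Mathlib

/-!
The maximal coupling of `π` and `π_μ` leaves their common mass `min π π_μ` on the diagonal and
couples the excesses `(π - π_μ)₊` and `(π_μ - π)₊`, both of mass `ε`, independently with weight
`ε⁻¹`. Since `‖x - y‖² ≤ 2‖x‖² + 2‖y‖²`, its cost is at most `2 ∫ ‖x‖² |π - π_μ|` (Villani).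
From `|U_μ - U| ≤ M` we get `e^{-M} ≤ c_μ ≤ e^M`, hence `e^{-2M} π ≤ π_μ ≤ e^{2M} π` and
`|π - π_μ| ≤ (2M + e^{2M} - 1) π`; finally `e^{2M} - 1 ≤ 2.12 M` for `M ≤ 0.05`.
-/

open Real MeasureTheory

/-- Squared 2-Wasserstein distance, defined as the infimum over couplings of the
expected squared distance. -/
noncomputable def W2sq {d : ℕ} (μ ν : Measure (EuclideanSpace ℝ (Fin d))) : ℝ :=
  sInf { c : ℝ | ∃ γ : Measure (EuclideanSpace ℝ (Fin d) × EuclideanSpace ℝ (Fin d)),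
    IsProbabilityMeasure γ ∧ γ.map Prod.fst = μ ∧ γ.map Prod.snd = ν ∧
    c = ∫ z, ‖z.1 - z.2‖ ^ 2 ∂γ }

open scoped ENNReal

lemma MeasureTheory.Measure.inv_mul_measure_univ_smul {X : Type*} [MeasurableSpace X]
    (ν : Measure X) [IsFiniteMeasure ν] : ((ν Set.univ)⁻¹ * ν Set.univ) • ν = ν := by
  rcases eq_or_ne (ν Set.univ) 0 with h | h
  · rw [Measure.measure_univ_eq_zero.mp h, smul_zero]
  · rw [ENNReal.inv_mul_cancel h (measure_ne_top _ _), one_smul]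

lemma Pi.inf_add_tsub_eq_left {X : Type*} (F G : X → ℝ≥0∞) : F ⊓ G + (F - G) = F := by
  ext x
  rw [Pi.add_apply, Pi.sub_apply, ← tsub_min]
  exact add_tsub_cancel_of_le inf_le_left

section OverlapCoupling

variable {X : Type*} [MeasurableSpace X] (μ : Measure X) (F G : X → ℝ≥0∞)

/-- The maximal coupling of `μ.withDensity F` and `μ.withDensity G`. -/
noncomputable def overlapCoupling [SFinite μ] : Measure (X × X) :=
  (μ.withDensity (F ⊓ G)).map (fun x => (x, x)) +
    (∫⁻ x, (F - G) x ∂μ)⁻¹ • (μ.withDensity (F - G)).prod (μ.withDensity (G - F))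

variable {μ F G}

lemma isFiniteMeasure_withDensity_tsub (hF : ∫⁻ x, F x ∂μ ≠ ∞) :
    IsFiniteMeasure (μ.withDensity (F - G)) :=
  isFiniteMeasure_withDensity <| ne_top_of_le_ne_top hF (lintegral_mono fun _ => tsub_le_self)

lemma lintegral_tsub_comm (hF : Measurable F) (hG : Measurable G)
    (hFG : ∫⁻ x, F x ∂μ = ∫⁻ x, G x ∂μ) (hF_fin : ∫⁻ x, F x ∂μ ≠ ∞) :
    ∫⁻ x, (G - F) x ∂μ = ∫⁻ x, (F - G) x ∂μ := by
  have h_inf : ∫⁻ x, (F ⊓ G) x ∂μ ≠ ∞ :=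
    ne_top_of_le_ne_top hF_fin (lintegral_mono fun _ => inf_le_left)
  have hm := (hF.inf hG).aemeasurable (μ := μ)
  calc ∫⁻ x, (G - F) x ∂μ = ∫⁻ x, G x - (F ⊓ G) x ∂μ := by
        congr 1; ext x; simp only [Pi.sub_apply, Pi.inf_apply, inf_comm (F x), tsub_min]
    _ = ∫⁻ x, F x - (F ⊓ G) x ∂μ := by
        rw [lintegral_sub' hm h_inf (ae_of_all _ fun _ => inf_le_right),
          lintegral_sub' hm h_inf (ae_of_all _ fun _ => inf_le_left), hFG]
    _ = ∫⁻ x, (F - G) x ∂μ := by congr 1; ext x; exact tsub_min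

lemma withDensity_tsub_apply_univ_comm (hF : Measurable F) (hG : Measurable G)
    (hFG : ∫⁻ x, F x ∂μ = ∫⁻ x, G x ∂μ) (hF_fin : ∫⁻ x, F x ∂μ ≠ ∞) :
    μ.withDensity (G - F) Set.univ = μ.withDensity (F - G) Set.univ := by
  simp only [withDensity_apply _ MeasurableSet.univ, Measure.restrict_univ]
  exact lintegral_tsub_comm hF hG hFG hF_fin

variable [SFinite μ]

lemma overlapCoupling_map_fst (hF : Measurable F) (hG : Measurable G)
    (hFG : ∫⁻ x, F x ∂μ = ∫⁻ x, G x ∂μ) (hF_fin : ∫⁻ x, F x ∂μ ≠ ∞) :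
    (overlapCoupling μ F G).map Prod.fst = μ.withDensity F := by
  have := isFiniteMeasure_withDensity_tsub (G := G) hF_fin
  rw [overlapCoupling, Measure.map_add _ _ measurable_fst, Measure.map_smul,
    Measure.map_map measurable_fst (by fun_prop), Measure.map_fst_prod, smul_smul,
    withDensity_tsub_apply_univ_comm hF hG hFG hF_fin, ← setLIntegral_univ,
    ← withDensity_apply _ MeasurableSet.univ, Measure.inv_mul_measure_univ_smul,
    show Prod.fst ∘ (fun x : X => (x, x)) = id from rfl, Measure.map_id]
  conv_rhs => rw [← Pi.inf_add_tsub_eq_left F G, withDensity_add_left (hF.inf hG)]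

lemma overlapCoupling_map_snd (hF : Measurable F) (hG : Measurable G)
    (hFG : ∫⁻ x, F x ∂μ = ∫⁻ x, G x ∂μ) (hF_fin : ∫⁻ x, F x ∂μ ≠ ∞) :
    (overlapCoupling μ F G).map Prod.snd = μ.withDensity G := by
  have := isFiniteMeasure_withDensity_tsub (G := F) (hFG ▸ hF_fin)
  rw [overlapCoupling, Measure.map_add _ _ measurable_snd, Measure.map_smul,
    Measure.map_map measurable_snd (by fun_prop), Measure.map_snd_prod, smul_smul,
    ← setLIntegral_univ, ← withDensity_apply _ MeasurableSet.univ,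
    ← withDensity_tsub_apply_univ_comm hF hG hFG hF_fin, Measure.inv_mul_measure_univ_smul,
    show Prod.snd ∘ (fun x : X => (x, x)) = id from rfl, Measure.map_id]
  conv_rhs => rw [← Pi.inf_add_tsub_eq_left G F, withDensity_add_left (hG.inf hF), inf_comm]

lemma lintegral_overlapCoupling_le {c : X × X → ℝ≥0∞} {w : X → ℝ≥0∞} (hc : Measurable c)
    (hw : Measurable w) (hc_diag : ∀ x, c (x, x) = 0) (hcw : ∀ x y, c (x, y) ≤ w x + w y)
    (hF : Measurable F) (hG : Measurable G)
    (hFG : ∫⁻ x, F x ∂μ = ∫⁻ x, G x ∂μ) (hF_fin : ∫⁻ x, F x ∂μ ≠ ∞) :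
    ∫⁻ z, c z ∂overlapCoupling μ F G ≤ ∫⁻ x, w x * ((F - G) x + (G - F) x) ∂μ := by
  set ν := μ.withDensity (F - G)
  set ν' := μ.withDensity (G - F)
  have : IsFiniteMeasure ν := isFiniteMeasure_withDensity_tsub hF_fin
  have : IsFiniteMeasure ν' := isFiniteMeasure_withDensity_tsub (hFG ▸ hF_fin)
  have hν : ∫⁻ x, (F - G) x ∂μ = ν Set.univ := by
    rw [withDensity_apply _ MeasurableSet.univ, Measure.restrict_univ]
  have hνν' : ν' Set.univ = ν Set.univ := withDensity_tsub_apply_univ_comm hF hG hFG hF_fin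
  have hprod : ∫⁻ z, c z ∂ν.prod ν' ≤ ν Set.univ * (∫⁻ x, w x ∂ν + ∫⁻ x, w x ∂ν') :=
    calc ∫⁻ z, c z ∂ν.prod ν' ≤ ∫⁻ z, w z.1 + w z.2 ∂ν.prod ν' :=
          lintegral_mono fun z => hcw z.1 z.2
      _ = ∫⁻ x, w x ∂(ν.prod ν').map Prod.fst + ∫⁻ y, w y ∂(ν.prod ν').map Prod.snd := by
          rw [lintegral_add_left (by fun_prop), lintegral_map hw measurable_fst,
            lintegral_map hw measurable_snd]
      _ = ν Set.univ * (∫⁻ x, w x ∂ν + ∫⁻ x, w x ∂ν') := by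
          rw [Measure.map_fst_prod, Measure.map_snd_prod, lintegral_smul_measure,
            lintegral_smul_measure, hνν', smul_eq_mul, smul_eq_mul, mul_add]
  calc ∫⁻ z, c z ∂overlapCoupling μ F G = (ν Set.univ)⁻¹ * ∫⁻ z, c z ∂ν.prod ν' := by
        rw [overlapCoupling, lintegral_add_measure, lintegral_map hc (by fun_prop),
          lintegral_smul_measure, hν]
        simp only [hc_diag, lintegral_zero, zero_add, smul_eq_mul]
        rfl
    _ ≤ (ν Set.univ)⁻¹ * ν Set.univ * (∫⁻ x, w x ∂ν + ∫⁻ x, w x ∂ν') := by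
        rw [mul_assoc]; gcongr
    _ ≤ ∫⁻ x, w x ∂ν + ∫⁻ x, w x ∂ν' := mul_le_of_le_one_left' (ENNReal.inv_mul_le_one _)
    _ = ∫⁻ x, w x * ((F - G) x + (G - F) x) ∂μ := by
        rw [lintegral_withDensity_eq_lintegral_mul _ (hF.sub hG) hw,
          lintegral_withDensity_eq_lintegral_mul _ (hG.sub hF) hw,
          ← lintegral_add_left (by fun_prop)]
        congr 1; ext x; simp only [Pi.mul_apply]; ring

end OverlapCoupling

lemma norm_sub_sq_le_two_mul_add {E : Type*} [SeminormedAddGroup E] (x y : E) :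
    ‖x - y‖ ^ 2 ≤ 2 * ‖x‖ ^ 2 + 2 * ‖y‖ ^ 2 :=
  calc ‖x - y‖ ^ 2 ≤ (‖x‖ + ‖y‖) ^ 2 := by gcongr; exact norm_sub_le x y
    _ ≤ 2 * ‖x‖ ^ 2 + 2 * ‖y‖ ^ 2 := by nlinarith [add_sq_le (a := ‖x‖) (b := ‖y‖)]

lemma ENNReal.ofReal_sub_add_ofReal_sub {a b : ℝ} (ha : 0 ≤ a) (hb : 0 ≤ b) :
    ENNReal.ofReal a - ENNReal.ofReal b + (ENNReal.ofReal b - ENNReal.ofReal a) =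
      ENNReal.ofReal |a - b| := by
  rcases le_total a b with hab | hab
  · rw [tsub_eq_zero_of_le (ENNReal.ofReal_le_ofReal hab), zero_add, ← ENNReal.ofReal_sub _ ha,
      abs_sub_comm, abs_of_nonneg (sub_nonneg.2 hab)]
  · rw [tsub_eq_zero_of_le (ENNReal.ofReal_le_ofReal hab), add_zero, ← ENNReal.ofReal_sub _ hb,
      abs_of_nonneg (sub_nonneg.2 hab)]

lemma MeasureTheory.Integrable.exists_measurable_ofReal_ae_eq {X : Type*} [MeasurableSpace X]
    {μ : Measure X} {f : X → ℝ} (hf : Integrable f μ) (hf₀ : 0 ≤ f) :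
    ∃ F : X → ℝ≥0∞, Measurable F ∧ (fun x => ENNReal.ofReal (f x)) =ᵐ[μ] F ∧
      ∫⁻ x, F x ∂μ = ENNReal.ofReal (∫ x, f x ∂μ) := by
  have hm := hf.aemeasurable.ennreal_ofReal
  refine ⟨hm.mk _, hm.measurable_mk, hm.ae_eq_mk, ?_⟩
  rw [← lintegral_congr_ae hm.ae_eq_mk, ofReal_integral_eq_lintegral_ofReal hf (ae_of_all _ hf₀)]

section Wasserstein

variable {d : ℕ}

lemma W2sq_le_integral_of_coupling {μ ν : Measure (EuclideanSpace ℝ (Fin d))}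
    (γ : Measure (EuclideanSpace ℝ (Fin d) × EuclideanSpace ℝ (Fin d))) [IsProbabilityMeasure γ]
    (h₁ : γ.map Prod.fst = μ) (h₂ : γ.map Prod.snd = ν) :
    W2sq μ ν ≤ ∫ z, ‖z.1 - z.2‖ ^ 2 ∂γ :=
  csInf_le ⟨0, by rintro c ⟨γ, -, -, -, rfl⟩; positivity⟩ ⟨γ, inferInstance, h₁, h₂, rfl⟩

/-- There is no coupling with the zero measure, and `sInf ∅ = 0` for real numbers. -/
lemma W2sq_zero_right (μ : Measure (EuclideanSpace ℝ (Fin d))) : W2sq μ 0 = 0 := by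
  rw [W2sq, ← Real.sInf_empty]
  congr 1
  refine Set.eq_empty_of_forall_notMem ?_
  rintro c ⟨γ, hγ, -, h₂, -⟩
  have h : (0 : Measure (EuclideanSpace ℝ (Fin d))) Set.univ = γ Set.univ := by
    rw [← h₂, Measure.map_apply measurable_snd MeasurableSet.univ, Set.preimage_univ]
  rw [Measure.coe_zero, Pi.zero_apply, measure_univ] at h
  exact zero_ne_one h

/-- Villani's inequality. -/
theorem W2sq_withDensity_le {f g : EuclideanSpace ℝ (Fin d) → ℝ}
    (hf : Integrable f) (hg : Integrable g) (hf₀ : 0 ≤ f) (hg₀ : 0 ≤ g)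
    (hf₁ : ∫ x, f x = 1) (hg₁ : ∫ x, g x = 1)
    (hfg : Integrable fun x => ‖x‖ ^ 2 * |f x - g x|) :
    W2sq (volume.withDensity fun x => ENNReal.ofReal (f x))
        (volume.withDensity fun x => ENNReal.ofReal (g x)) ≤
      2 * ∫ x, ‖x‖ ^ 2 * |f x - g x| := by
  obtain ⟨F, hFm, hF, hF₁⟩ := hf.exists_measurable_ofReal_ae_eq hf₀
  obtain ⟨G, hGm, hG, hG₁⟩ := hg.exists_measurable_ofReal_ae_eq hg₀
  rw [hf₁, ENNReal.ofReal_one] at hF₁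
  rw [hg₁, ENNReal.ofReal_one] at hG₁
  have hFG : ∫⁻ x, F x = ∫⁻ x, G x := hF₁.trans hG₁.symm
  have hF_fin : ∫⁻ x, F x ≠ ∞ := hF₁ ▸ ENNReal.one_ne_top
  set γ := overlapCoupling volume F G
  have h₁ : γ.map Prod.fst = volume.withDensity fun x => ENNReal.ofReal (f x) := by
    rw [withDensity_congr_ae hF]; exact overlapCoupling_map_fst hFm hGm hFG hF_fin
  have h₂ : γ.map Prod.snd = volume.withDensity fun x => ENNReal.ofReal (g x) := by
    rw [withDensity_congr_ae hG]; exact overlapCoupling_map_snd hFm hGm hFG hF_fin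
  have : IsProbabilityMeasure γ := ⟨by
    rw [← Set.preimage_univ (f := Prod.fst), ← Measure.map_apply measurable_fst MeasurableSet.univ,
      overlapCoupling_map_fst hFm hGm hFG hF_fin, withDensity_apply _ MeasurableSet.univ,
      Measure.restrict_univ, hF₁]⟩
  have hcost : ∫⁻ z, ENNReal.ofReal (‖z.1 - z.2‖ ^ 2) ∂γ ≤
      ENNReal.ofReal (2 * ∫ x, ‖x‖ ^ 2 * |f x - g x|) :=
    calc ∫⁻ z, ENNReal.ofReal (‖z.1 - z.2‖ ^ 2) ∂γ
        ≤ ∫⁻ x, ENNReal.ofReal (2 * ‖x‖ ^ 2) * ((F - G) x + (G - F) x) := by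
          refine lintegral_overlapCoupling_le (by fun_prop) (by fun_prop) (by simp)
            (fun x y => ?_) hFm hGm hFG hF_fin
          rw [← ENNReal.ofReal_add (by positivity) (by positivity)]
          exact ENNReal.ofReal_le_ofReal (norm_sub_sq_le_two_mul_add x y)
      _ = ∫⁻ x, ENNReal.ofReal (2 * (‖x‖ ^ 2 * |f x - g x|)) := by
          refine lintegral_congr_ae ?_
          filter_upwards [hF, hG] with x hFx hGx
          rw [Pi.sub_apply, Pi.sub_apply, ← hFx, ← hGx,
            ENNReal.ofReal_sub_add_ofReal_sub (hf₀ x) (hg₀ x), ← ENNReal.ofReal_mul (by positivity),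
            mul_assoc]
      _ = ENNReal.ofReal (2 * ∫ x, ‖x‖ ^ 2 * |f x - g x|) := by
          rw [← integral_const_mul, ofReal_integral_eq_lintegral_ofReal (hfg.const_mul 2)
            (ae_of_all _ fun x => by positivity)]
  calc W2sq _ _ ≤ ∫ z, ‖z.1 - z.2‖ ^ 2 ∂γ := W2sq_le_integral_of_coupling γ h₁ h₂
    _ ≤ 2 * ∫ x, ‖x‖ ^ 2 * |f x - g x| := by
      rw [integral_eq_lintegral_of_nonneg_ae (ae_of_all _ fun z => by positivity) (by fun_prop)]
      exact ENNReal.toReal_le_of_le_ofReal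
        (mul_nonneg zero_le_two (integral_nonneg fun x => by positivity)) hcost

end Wasserstein

lemma Real.exp_two_mul_sub_one_le {M : ℝ} (hM₀ : 0 ≤ M) (hM : M ≤ 0.05) :
    exp (2 * M) - 1 ≤ 2.12 * M := by
  have h := Real.exp_bound' (x := 2 * M) (by linarith) (by linarith) (n := 3) (by norm_num)
  norm_num [Finset.sum_range_succ, Nat.factorial] at h
  nlinarith [mul_nonneg (mul_nonneg hM₀ hM₀) (sub_nonneg.2 hM), mul_nonneg hM₀ (sub_nonneg.2 hM)]

lemma exp_neg_mem_Icc_of_abs_sub_le {a b M : ℝ} (h : |b - a| ≤ M) :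
    exp (-b) ∈ Set.Icc (exp (-M) * exp (-a)) (exp M * exp (-a)) := by
  obtain ⟨h₁, h₂⟩ := abs_le.1 h
  rw [← exp_add, ← exp_add]
  exact ⟨exp_le_exp.2 (by linarith), exp_le_exp.2 (by linarith)⟩

lemma abs_sub_le_of_mem_Icc_exp_mul {f g L : ℝ} (hf : 0 ≤ f) (hL : 0 ≤ L)
    (hg : g ∈ Set.Icc (exp (-L) * f) (exp L * f)) :
    |f - g| ≤ (L + exp L - 1) * f := by
  have h₁ : 1 - L ≤ exp (-L) := by linarith [add_one_le_exp (-L)]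
  have h₂ : 1 ≤ exp L := one_le_exp hL
  rw [abs_le]
  constructor <;> nlinarith [hg.1, hg.2]

section Gibbs

variable {X : Type*} [MeasurableSpace X] {μ : Measure X} {U V : X → ℝ} {M : ℝ}

lemma integral_exp_neg_mem_Icc (hpert : ∀ x, |V x - U x| ≤ M) (hU : ∫ x, exp (-U x) ∂μ = 1)
    (hV : Integrable (fun x => exp (-V x)) μ) :
    ∫ x, exp (-V x) ∂μ ∈ Set.Icc (exp (-M)) (exp M) := by
  have hU_int : Integrable (fun x => exp (-U x)) μ := .of_integral_ne_zero (by simp [hU])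
  constructor
  · calc exp (-M) = ∫ x, exp (-M) * exp (-U x) ∂μ := by rw [integral_const_mul, hU, mul_one]
      _ ≤ ∫ x, exp (-V x) ∂μ :=
          integral_mono (hU_int.const_mul _) hV fun x => (exp_neg_mem_Icc_of_abs_sub_le (hpert x)).1
  · calc ∫ x, exp (-V x) ∂μ ≤ ∫ x, exp M * exp (-U x) ∂μ :=
          integral_mono hV (hU_int.const_mul _) fun x => (exp_neg_mem_Icc_of_abs_sub_le (hpert x)).2
      _ = exp M := by rw [integral_const_mul, hU, mul_one]

lemma abs_exp_neg_sub_exp_neg_div_integral_le (hM : 0 ≤ M) (hpert : ∀ x, |V x - U x| ≤ M)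
    (hU : ∫ x, exp (-U x) ∂μ = 1) (hV : Integrable (fun x => exp (-V x)) μ) (x : X) :
    |exp (-U x) - exp (-V x) / ∫ y, exp (-V y) ∂μ| ≤ (2 * M + exp (2 * M) - 1) * exp (-U x) := by
  obtain ⟨hc₁, hc₂⟩ := integral_exp_neg_mem_Icc hpert hU hV
  obtain ⟨hx₁, hx₂⟩ := exp_neg_mem_Icc_of_abs_sub_le (hpert x)
  have hc : 0 < ∫ y, exp (-V y) ∂μ := (exp_pos _).trans_le hc₁
  refine abs_sub_le_of_mem_Icc_exp_mul (exp_pos _).le (by linarith) ⟨?_, ?_⟩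
  · rw [le_div_iff₀ hc]
    calc exp (-(2 * M)) * exp (-U x) * ∫ y, exp (-V y) ∂μ
        ≤ exp (-(2 * M)) * exp (-U x) * exp M := by gcongr
      _ = exp (-M) * exp (-U x) := by rw [mul_right_comm, ← exp_add, show -(2 * M) + M = -M by ring]
      _ ≤ exp (-V x) := hx₁
  · rw [div_le_iff₀ hc]
    calc exp (-V x) ≤ exp M * exp (-U x) := hx₂
      _ = exp (2 * M) * exp (-U x) * exp (-M) := by
          rw [mul_right_comm (exp (2 * M)), ← exp_add (2 * M), show 2 * M + -M = M by ring]
      _ ≤ exp (2 * M) * exp (-U x) * ∫ y, exp (-V y) ∂μ := by gcongr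

end Gibbs

theorem stmt_13 (d : ℕ) (U Uμ : EuclideanSpace ℝ (Fin d) → ℝ) (M E₂ cμ : ℝ)
    (hM0 : 0 ≤ M) (hM : M ≤ 0.05)
    (hpert : ∀ x, |Uμ x - U x| ≤ M)
    (hnorm : ∫ x : EuclideanSpace ℝ (Fin d), Real.exp (-U x) = 1)
    (hcμ : cμ = ∫ x : EuclideanSpace ℝ (Fin d), Real.exp (-Uμ x))
    (hE2i : Integrable (fun x : EuclideanSpace ℝ (Fin d) => ‖x‖ ^ 2 * Real.exp (-U x)))
    (hE2 : ∫ x : EuclideanSpace ℝ (Fin d), ‖x‖ ^ 2 * Real.exp (-U x) = E₂) :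
    W2sq (volume.withDensity fun x => ENNReal.ofReal (Real.exp (-U x)))
        (volume.withDensity fun x => ENNReal.ofReal (Real.exp (-Uμ x) / cμ))
      ≤ 2 * (2 * M + Real.exp (2 * M) - 1) * E₂ ∧
    2 * (2 * M + Real.exp (2 * M) - 1) * E₂ ≤ 8.24 * M * E₂ := by
  set K := 2 * M + exp (2 * M) - 1
  have hE₂ : 0 ≤ E₂ := hE2 ▸ integral_nonneg fun x => by positivity
  have hK : 0 ≤ K := by linarith [one_le_exp (by linarith : 0 ≤ 2 * M)]
  refine ⟨?_, by nlinarith [Real.exp_two_mul_sub_one_le hM0 hM]⟩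
  by_cases hV : Integrable fun x => exp (-Uμ x)
  swap
  · -- the integral defining `cμ` takes its junk value `0`, and so does `W2sq μ 0`
    rw [hcμ, integral_undef hV]
    simp only [div_zero, ENNReal.ofReal_zero, ← Pi.zero_def, withDensity_zero, W2sq_zero_right]
    positivity
  have hU : Integrable fun x => exp (-U x) := .of_integral_ne_zero (by simp [hnorm])
  have hc : 0 < cμ := hcμ ▸ (exp_pos _).trans_le (integral_exp_neg_mem_Icc hpert hnorm hV).1
  have hdiff (x : EuclideanSpace ℝ (Fin d)) :
      ‖x‖ ^ 2 * |exp (-U x) - exp (-Uμ x) / cμ| ≤ K * (‖x‖ ^ 2 * exp (-U x)) := by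
    rw [mul_left_comm]
    gcongr
    exact hcμ ▸ abs_exp_neg_sub_exp_neg_div_integral_le hM0 hpert hnorm hV x
  have hdiff_int : Integrable fun x => ‖x‖ ^ 2 * |exp (-U x) - exp (-Uμ x) / cμ| :=
    (hE2i.const_mul K).mono (by fun_prop) (ae_of_all _ fun x => by
      rw [norm_of_nonneg (by positivity), norm_of_nonneg (by positivity)]
      exact hdiff x)
  calc W2sq _ _ ≤ 2 * ∫ x, ‖x‖ ^ 2 * |exp (-U x) - exp (-Uμ x) / cμ| :=
        W2sq_withDensity_le hU (hV.div_const _) (fun x => (exp_pos _).le)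
          (fun x => (div_pos (exp_pos _) hc).le) hnorm
          (by rw [integral_div, ← hcμ, div_self hc.ne']) hdiff_int
    _ ≤ 2 * ∫ x, K * (‖x‖ ^ 2 * exp (-U x)) := by
        gcongr 2 * ?_
        exact integral_mono hdiff_int (hE2i.const_mul K) hdiff
    _ = 2 * K * E₂ := by rw [integral_const_mul, hE2, mul_assoc]
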